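/- arXiv:1408.5040 — 10 statements merged into one kernel-verified Lean document; each statement's English description precedes it below -/
import Mathlib

section
/- For all real x with 0 < x < 1, (log x)² ≥ (x² − 1)/2 − log x. -/
/-! Put `u = 2 log x ≤ 0`, so that `x ^ 2 = exp u`; the inequality becomes the second-order
Taylor bound `exp u ≤ 1 + u + u ^ 2 / 2`, which holds for `u ≤ 0` because
`exp u - u - u ^ 2 / 2` is monotone (its derivative is `exp u - (1 + u) ≥ 0`). -/

namespace Real

theorem monotone_exp_sub_sub_sq_div_two : Monotone fun x : ℝ => exp x - x - x ^ 2 / 2 := by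
  have hderiv (x : ℝ) : HasDerivAt (fun x : ℝ => exp x - x - x ^ 2 / 2) (exp x - 1 - x) x := by
    refine (((hasDerivAt_exp x).fun_sub (hasDerivAt_id' x)).fun_sub
      ((hasDerivAt_pow 2 x).div_const 2)).congr_deriv ?_
    norm_num
  refine monotone_of_deriv_nonneg (fun x => (hderiv x).differentiableAt) fun x => ?_
  rw [(hderiv x).deriv]
  linarith [add_one_le_exp x]

theorem exp_le_one_add_add_sq_div_two_of_nonpos {x : ℝ} (hx : x ≤ 0) :
    exp x ≤ 1 + x + x ^ 2 / 2 := by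
  have hmono := monotone_exp_sub_sub_sq_div_two hx
  simp only [exp_zero] at hmono
  linarith

end Real

theorem stmt7 (x : ℝ) (hx0 : 0 < x) (hx1 : x < 1) :
    (x ^ 2 - 1) / 2 - Real.log x ≤ (Real.log x) ^ 2 := by
  have hlog : 2 * Real.log x ≤ 0 := by linarith [Real.log_nonpos hx0.le hx1.le]
  have hsq : Real.exp (2 * Real.log x) = x ^ 2 := by
    rw [← Real.exp_log (pow_pos hx0 2), Real.log_pow, Nat.cast_ofNat]
  have htaylor := Real.exp_le_one_add_add_sq_div_two_of_nonpos hlog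
  rw [hsq] at htaylor
  linarith
end

section
/- Let z_1, …, z_N be complex numbers, all with |z_n| > 0, and define S = Σ_{|z_n|<1} ((|z_n|² − 1)/2 − log|z_n|) and T = Σ_{|z_n|<1} (−log|z_n|). Then S ≤ T². -/
open Real Finset

/-- Substituting `x = exp (-t)` with `t ≥ 0`, the claim becomes `x ^ 2 ≤ 1 - 2t + 2t²`. This
follows from `x ^ 2 * exp (2t) = 1`, the bound `exp (2t) ≥ 1 + 2t + 2t²`, and the identity
`(1 - 2t + 2t²)(1 + 2t + 2t²) = 1 + 4t⁴ ≥ 1`. -/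
lemma Real.sq_sub_one_div_two_sub_log_le_log_sq {x : ℝ} (hx0 : 0 < x) (hx1 : x ≤ 1) :
    (x ^ 2 - 1) / 2 - log x ≤ log x ^ 2 := by
  set t := -log x with ht_def
  have ht : 0 ≤ t := neg_nonneg.mpr (log_nonpos hx0.le hx1)
  have hx_exp : x * exp t = 1 := by rw [exp_neg, exp_log hx0, mul_inv_cancel₀ hx0.ne']
  have hexp : 1 + 2 * t + 2 * t ^ 2 ≤ exp t ^ 2 := by
    have := quadratic_le_exp_of_nonneg (mul_nonneg zero_le_two ht)
    rw [← exp_nat_mul] at *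
    push_cast
    linarith
  have hpos : 0 < 1 + 2 * t + 2 * t ^ 2 := by positivity
  have hsq_le : x ^ 2 ≤ 1 - 2 * t + 2 * t ^ 2 := by
    refine le_of_mul_le_mul_right ?_ hpos
    calc x ^ 2 * (1 + 2 * t + 2 * t ^ 2) ≤ x ^ 2 * exp t ^ 2 := by gcongr
      _ = 1 := by rw [← mul_pow, hx_exp, one_pow]
      _ ≤ (1 - 2 * t + 2 * t ^ 2) * (1 + 2 * t + 2 * t ^ 2) := by nlinarith [pow_nonneg ht 4]
  have hlog : log x = -t := by rw [ht_def, neg_neg]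
  rw [hlog]
  linarith

theorem stmt8 (N : ℕ) (z : Fin N → ℂ) (hz : ∀ n, 0 < ‖z n‖) :
    (∑ n ∈ Finset.univ.filter (fun n => ‖z n‖ < 1),
        (((‖z n‖) ^ 2 - 1) / 2 - Real.log (‖z n‖))) ≤
      (∑ n ∈ Finset.univ.filter (fun n => ‖z n‖ < 1),
          -Real.log (‖z n‖)) ^ 2 := by
  have hlt : ∀ n ∈ univ.filter (fun n => ‖z n‖ < 1), ‖z n‖ < 1 := fun n hn => (mem_filter.mp hn).2
  calc _ ≤ ∑ n ∈ univ.filter (fun n => ‖z n‖ < 1), (-log ‖z n‖) ^ 2 :=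
        sum_le_sum fun n hn => by
          rw [neg_sq]
          exact sq_sub_one_div_two_sub_log_le_log_sq (hz n) (hlt n hn).le
    _ ≤ _ := sum_sq_le_sq_sum_of_nonneg fun n hn =>
        neg_nonneg.mpr (log_nonpos (norm_nonneg _) (hlt n hn).le)
end

section
/- Let z_1, …, z_N be nonzero complex numbers and define A = Σ_{|z_n|<1} ((|z_n|² − 1)/2 − log|z_n|). If A < 1, then every z_n with |z_n| < 1 satisfies |z_n| ≥ 1 − √A. -/
/-!
Put `t = 1 - x` for `0 < x ≤ 1`. Then `(x² - 1) / 2 = t² / 2 - t`, while the Taylor series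
`-log (1 - t) = ∑ tᵏ / k` has nonnegative terms, so `-log x ≥ t + t² / 2`. Hence each summand of
`A` is at least `(1 - ‖z n‖)² ≥ 0`, so `(1 - ‖z n‖)² ≤ A`, and taking square roots finishes.
-/

open Real

lemma add_sq_div_two_le_neg_log_one_sub {t : ℝ} (ht₀ : 0 ≤ t) (ht₁ : t < 1) :
    t + t ^ 2 / 2 ≤ -log (1 - t) := by
  have hsum := hasSum_pow_div_log_of_abs_lt_one (abs_lt.mpr ⟨by linarith, ht₁⟩)
  have h := sum_le_hasSum (Finset.range 2) (fun n _ => by positivity) hsum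
  norm_num [Finset.sum_range_succ] at h
  linarith

lemma sq_one_sub_le_half_sq_sub_one_sub_log {x : ℝ} (hx₀ : 0 < x) (hx₁ : x ≤ 1) :
    (1 - x) ^ 2 ≤ (x ^ 2 - 1) / 2 - log x := by
  have h := add_sq_div_two_le_neg_log_one_sub (sub_nonneg.mpr hx₁) (by linarith)
  rw [sub_sub_cancel] at h
  nlinarith

lemma one_sub_sqrt_sum_le {ι : Type*} {s : Finset ι} {r : ι → ℝ}
    (hr₀ : ∀ j ∈ s, 0 < r j) (hr₁ : ∀ j ∈ s, r j ≤ 1) {i : ι} (hi : i ∈ s) :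
    1 - √(∑ j ∈ s, ((r j ^ 2 - 1) / 2 - log (r j))) ≤ r i := by
  have hterm : ∀ j ∈ s, (1 - r j) ^ 2 ≤ (r j ^ 2 - 1) / 2 - log (r j) :=
    fun j hj => sq_one_sub_le_half_sq_sub_one_sub_log (hr₀ j hj) (hr₁ j hj)
  have hle : (1 - r i) ^ 2 ≤ ∑ j ∈ s, ((r j ^ 2 - 1) / 2 - log (r j)) :=
    (hterm i hi).trans <|
      Finset.single_le_sum (fun j hj => (sq_nonneg _).trans (hterm j hj)) hi
  linarith [le_sqrt_of_sq_le hle]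

theorem stmt9_general (N : ℕ) (z : Fin N → ℂ) (hz : ∀ n, z n ≠ 0) :
    ∀ n, ‖z n‖ < 1 →
      1 - Real.sqrt (∑ n ∈ Finset.univ.filter (fun n => ‖z n‖ < 1),
          ((‖z n‖ ^ 2 - 1) / 2 - Real.log ‖z n‖)) ≤
        ‖z n‖ := fun n hn =>
  one_sub_sqrt_sum_le (fun m _ => norm_pos_iff.mpr (hz m))
    (fun _ hm => (Finset.mem_filter.mp hm).2.le) (Finset.mem_filter.mpr ⟨Finset.mem_univ n, hn⟩)

theorem stmt9 (N : ℕ) (z : Fin N → ℂ) (hz : ∀ n, z n ≠ 0)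
    (hA : (∑ n ∈ Finset.univ.filter (fun n => ‖z n‖ < 1),
        ((‖z n‖ ^ 2 - 1) / 2 - Real.log ‖z n‖)) < 1) :
    ∀ n, ‖z n‖ < 1 →
      1 - Real.sqrt (∑ n ∈ Finset.univ.filter (fun n => ‖z n‖ < 1),
          ((‖z n‖ ^ 2 - 1) / 2 - Real.log ‖z n‖)) ≤
        ‖z n‖ :=
  stmt9_general N z hz
end

section
/- For all real x with 0 < x < 1, (log x)² ≤ ((x²−1)/2 − log x) · (1 + g(x)), where g(x) = Σ_{k≥1} (Σ_{ℓ=1}^{k+1} 1/(ℓ(k+2−ℓ)) − 1/(k+2)) (1 − x)^k. -/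
/-! With `t = 1 - x` we have `-log x = ∑ tⁿ⁺¹/(n+1)`, so the Cauchy product gives
`log² x = t² + ∑_{k≥0} c_{k+3} t^(k+3)` with `c_m = ∑_{l=1}^{m-1} 1/(l(m-l))`, while
`(x² - 1)/2 - log x = t² + ∑_{k≥0} t^(k+3)/(k+3)`. Subtracting, `log² x - ((x² - 1)/2 - log x) = t² g(x)`
exactly. Since `c_{k+3} ≥ 1/(k+2)` every term of `g` is nonnegative, and `(x² - 1)/2 - log x ≥ t²`,
so `t² g(x) ≤ ((x² - 1)/2 - log x) g(x)`. -/

open Real Finset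

lemma summable_norm_pow_succ_div {t : ℝ} (ht : |t| < 1) :
    Summable fun n : ℕ => ‖t ^ (n + 1) / (n + 1)‖ := by
  convert (hasSum_pow_div_log_of_abs_lt_one (x := |t|) (by rwa [abs_abs])).summable using 2 with n
  rw [norm_div, Real.norm_of_nonneg (by positivity : (0 : ℝ) ≤ n + 1), norm_pow, norm_eq_abs]

lemma hasSum_pow_add_three_div {t : ℝ} (ht : |t| < 1) :
    HasSum (fun k : ℕ => t ^ (k + 3) / ((k : ℝ) + 3)) (-log (1 - t) - t - t ^ 2 / 2) := by
  have h := (hasSum_nat_add_iff' 2).mpr (hasSum_pow_div_log_of_abs_lt_one ht)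
  rw [show ∑ i ∈ range 2, t ^ (i + 1) / ((i : ℝ) + 1) = t + t ^ 2 / 2 by
    norm_num [sum_range_succ], ← sub_sub] at h
  refine h.congr_fun fun k => ?_
  push_cast; ring

/-- The coefficient of `t ^ (n + 2)` in `log (1 - t) ^ 2`. -/
noncomputable def logSqCoeff (n : ℕ) : ℝ :=
  ∑ i ∈ range (n + 1), 1 / (((i : ℝ) + 1) * ((n - i : ℕ) + 1))

lemma logSqCoeff_zero : logSqCoeff 0 = 1 := by
  simp [logSqCoeff]

lemma logSqCoeff_succ (k : ℕ) :
    logSqCoeff (k + 1) = ∑ l ∈ Icc 1 (k + 2), (1 : ℝ) / ((l : ℝ) * ((k + 3 - l : ℕ) : ℝ)) := by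
  rw [logSqCoeff, ← Ico_add_one_right_eq_Icc, sum_Ico_eq_sum_range, show k + 2 + 1 - 1 = k + 2 by rfl]
  refine sum_congr rfl fun i hi => ?_
  rw [mem_range] at hi
  rw [show k + 3 - (1 + i) = k + 1 - i + 1 by omega]
  push_cast; ring

lemma one_div_add_three_le_logSqCoeff_succ (k : ℕ) : 1 / ((k : ℝ) + 3) ≤ logSqCoeff (k + 1) := by
  have h0 := single_le_sum (f := fun i : ℕ => 1 / (((i : ℝ) + 1) * ((k + 1 - i : ℕ) + 1)))
    (fun i _ => by positivity) (mem_range.2 (Nat.succ_pos (k + 1)))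
  calc 1 / ((k : ℝ) + 3) ≤ 1 / ((k : ℝ) + 2) := by gcongr; norm_num
    _ = 1 / ((((0 : ℕ) : ℝ) + 1) * (((k + 1 - 0 : ℕ) : ℝ) + 1)) := by push_cast; ring
    _ ≤ logSqCoeff (k + 1) := h0

lemma hasSum_log_one_sub_sq {t : ℝ} (ht : |t| < 1) :
    HasSum (fun n : ℕ => logSqCoeff n * t ^ (n + 2)) (log (1 - t) ^ 2) := by
  have h := hasSum_sum_range_mul_of_summable_norm (summable_norm_pow_succ_div ht)
    (summable_norm_pow_succ_div ht)
  rw [(hasSum_pow_div_log_of_abs_lt_one ht).tsum_eq, neg_mul_neg, ← sq] at h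
  refine h.congr_fun fun n => ?_
  rw [logSqCoeff, sum_mul]
  refine sum_congr rfl fun i hi => ?_
  have hin : i + 1 + (n - i + 1) = n + 2 := by grind
  rw [div_mul_div_comm, ← pow_add, hin]
  ring

lemma log_one_sub_sq_eq {t : ℝ} (ht : |t| < 1) :
    log (1 - t) ^ 2 = (((1 - t) ^ 2 - 1) / 2 - log (1 - t)) +
      t ^ 2 * ∑' k : ℕ, (logSqCoeff (k + 1) - 1 / ((k : ℝ) + 3)) * t ^ (k + 1) := by
  have hsq := (hasSum_nat_add_iff' 1).mpr (hasSum_log_one_sub_sq ht)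
  simp only [sum_range_one, logSqCoeff_zero, one_mul, zero_add] at hsq
  have h : HasSum (fun k : ℕ => t ^ 2 * ((logSqCoeff (k + 1) - 1 / ((k : ℝ) + 3)) * t ^ (k + 1)))
      (log (1 - t) ^ 2 - t ^ 2 - (-log (1 - t) - t - t ^ 2 / 2)) :=
    (hsq.sub (hasSum_pow_add_three_div ht)).congr_fun fun k => by ring
  rw [← tsum_mul_left, h.tsum_eq]
  ring

lemma sq_le_sub_log_one_sub {t : ℝ} (ht0 : 0 ≤ t) (ht1 : t < 1) :
    t ^ 2 ≤ ((1 - t) ^ 2 - 1) / 2 - log (1 - t) := by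
  have h := (hasSum_pow_add_three_div (abs_lt.2 ⟨by linarith, ht1⟩)).nonneg fun k => by positivity
  linarith

theorem stmt12 (x : ℝ) (hx0 : 0 < x) (hx1 : x < 1) :
    (Real.log x) ^ 2 ≤
      ((x ^ 2 - 1) / 2 - Real.log x) *
        (1 + ∑' k : ℕ,
          ((∑ l ∈ Finset.Icc 1 (k + 2), (1 : ℝ) / ((l : ℝ) * ((k + 3 - l : ℕ) : ℝ))) -
              1 / ((k : ℝ) + 3)) * (1 - x) ^ (k + 1)) := by
  have ht0 : 0 ≤ 1 - x := by linarith
  have ht1 : 1 - x < 1 := by linarith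
  have hlog_sq := log_one_sub_sq_eq (abs_lt.2 ⟨by linarith, ht1⟩)
  have hA := sq_le_sub_log_one_sub ht0 ht1
  rw [sub_sub_cancel] at hlog_sq hA
  simp only [← logSqCoeff_succ]
  have hg : 0 ≤ ∑' k : ℕ, (logSqCoeff (k + 1) - 1 / ((k : ℝ) + 3)) * (1 - x) ^ (k + 1) :=
    tsum_nonneg fun k =>
      mul_nonneg (sub_nonneg.2 (one_div_add_three_le_logSqCoeff_succ k)) (pow_nonneg ht0 _)
  rw [hlog_sq]
  linear_combination mul_le_mul_of_nonneg_right hA hg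
end

section
/- For all real x with 0 < x < 1, (log x)² − ((x² − 1)/2 − log x) = (1 − x)² · Σ_{k≥1} (Σ_{ℓ=1}^{k+1} 1/(ℓ(k+2−ℓ)) − 1/(k+2)) (1 − x)^k. -/
/-!
Put `t = 1 - x`, so that `-log x = ∑ tⁿ / n` with `|t| < 1`. The Cauchy square of this series
gives `(log x)² = ∑_{m ≥ 2} (∑_{l=1}^{m-1} 1 / (l (m - l))) tᵐ`, whose `m = 2` term is `t²`, while
`(x² - 1) / 2 = -t + t² / 2`. So the left side is the `m ≥ 3` tail of the square minus the `m ≥ 3`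
tail of `∑ tᵐ / m`, which is the right side once `t²` is factored out.
-/

open Finset

namespace Real

lemma summable_norm_pow_succ_div {t : ℝ} (ht : |t| < 1) :
    Summable fun n : ℕ => ‖t ^ (n + 1) / (n + 1)‖ := by
  refine .of_nonneg_of_le (fun _ => norm_nonneg _) (fun n => ?_)
    (summable_geometric_of_lt_one (abs_nonneg t) ht)
  rw [norm_div, norm_pow, Real.norm_eq_abs, pow_succ]
  calc |t| ^ n * |t| / ‖(n : ℝ) + 1‖ ≤ |t| ^ n * |t| / 1 := by
        gcongr
        rw [Real.norm_of_nonneg (by positivity)]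
        simp
    _ ≤ |t| ^ n := by
        rw [div_one]
        exact mul_le_of_le_one_right (by positivity) ht.le

/-- The coefficient of `t ^ (n + 2)` in the power series of `log (1 - t) ^ 2`. -/
noncomputable def logSqCoeff (n : ℕ) : ℝ :=
  ∑ l ∈ Icc 1 (n + 1), 1 / ((l : ℝ) * ((n + 2 - l : ℕ) : ℝ))

lemma sum_range_mul_pow_succ_div (t : ℝ) (n : ℕ) :
    ∑ k ∈ range (n + 1), t ^ (k + 1) / (k + 1) * (t ^ (n - k + 1) / ((n - k : ℕ) + 1)) =
      logSqCoeff n * t ^ (n + 2) := by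
  rw [logSqCoeff, sum_mul, ← Ico_add_one_right_eq_Icc, sum_Ico_eq_sum_range]
  refine sum_congr rfl fun k hk => ?_
  have hkn : k ≤ n := Nat.lt_succ_iff.mp (mem_range.mp hk)
  rw [show n + 2 - (1 + k) = n - k + 1 by omega, show n + 2 = k + 1 + (n - k + 1) by omega,
    pow_add]
  push_cast
  field_simp
  ring

lemma hasSum_log_one_sub_sq {t : ℝ} (ht : |t| < 1) :
    HasSum (fun n => logSqCoeff n * t ^ (n + 2)) (log (1 - t) ^ 2) := by
  have h := hasSum_sum_range_mul_of_summable_norm (summable_norm_pow_succ_div ht)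
    (summable_norm_pow_succ_div ht)
  rw [(hasSum_pow_div_log_of_abs_lt_one ht).tsum_eq, neg_mul_neg, ← sq] at h
  simpa only [sum_range_mul_pow_succ_div] using h

lemma hasSum_log_one_sub_sq_add_log_one_sub {t : ℝ} (ht : |t| < 1) :
    HasSum (fun k : ℕ => (logSqCoeff (k + 1) - 1 / ((k : ℝ) + 3)) * t ^ (k + 3))
      (log (1 - t) ^ 2 + log (1 - t) + t - t ^ 2 / 2) := by
  have hsq := (hasSum_nat_add_iff' 1).mpr (hasSum_log_one_sub_sq ht)
  have hlog := (hasSum_nat_add_iff' 2).mpr (hasSum_pow_div_log_of_abs_lt_one ht)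
  have hsq0 : logSqCoeff 0 = 1 := by norm_num [logSqCoeff]
  norm_num [sum_range_succ, hsq0] at hsq hlog
  rw [show log (1 - t) ^ 2 + log (1 - t) + t - t ^ 2 / 2 =
      log (1 - t) ^ 2 - t ^ 2 - (-log (1 - t) - (t + t ^ 2 / 2)) by ring]
  exact (hsq.sub hlog).congr_fun fun k => by ring

end Real

theorem stmt13 (x : ℝ) (hx0 : 0 < x) (hx1 : x < 1) :
    (Real.log x) ^ 2 - ((x ^ 2 - 1) / 2 - Real.log x) =
      (1 - x) ^ 2 *
        ∑' k : ℕ,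
          ((∑ l ∈ Finset.Icc 1 (k + 2), (1 : ℝ) / ((l : ℝ) * ((k + 3 - l : ℕ) : ℝ))) -
              1 / ((k : ℝ) + 3)) * (1 - x) ^ (k + 1) := by
  have ht : |1 - x| < 1 := abs_lt.mpr ⟨by linarith, by linarith⟩
  have h := Real.hasSum_log_one_sub_sq_add_log_one_sub ht
  rw [sub_sub_cancel] at h
  calc _ = Real.log x ^ 2 + Real.log x + (1 - x) - (1 - x) ^ 2 / 2 := by ring
    _ = _ := h.tsum_eq.symm
    _ = _ := by
      rw [← tsum_mul_left]
      exact tsum_congr fun k => by rw [Real.logSqCoeff]; ring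
end

section
/- For all real x with 0 < x < 1, (log x)² ≥ (x² − 1)/2 − log x, with the difference equal to a series with nonnegative coefficients; in particular if z_1,…,z_N all satisfy |z_n| = r for some fixed 0 < r < 1, then Z · Σ (log r)² ≥ Z · Σ ((r²−1)/2 − log r), i.e., (log² M(P))/Z(P) ≥ log‖P‖₀ for balanced P with |P(0)| = 1. -/
lemma key (x : ℝ) (hx : 0 < x) (hx1 : x < 1) :
    (x ^ 2 - 1) / 2 - Real.log x ≤ (Real.log x) ^ 2 := by
  set s := Real.log x with hs
  have hsneg : s < 0 := Real.log_neg hx hx1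
  have hxe : Real.exp s = x := Real.exp_log hx
  have h1 : 1 + (-(2*s)) + (-(2*s)) ^ 2 / 2 ≤ Real.exp (-(2*s)) :=
    Real.quadratic_le_exp_of_nonneg (by linarith)
  have h2 : Real.exp (2*s) * Real.exp (-(2*s)) = 1 := by
    rw [← Real.exp_add]; ring_nf; exact Real.exp_zero
  have h3 : x ^ 2 = Real.exp (2*s) := by
    rw [← hxe, ← Real.exp_nat_mul]; norm_num
  have hpos : 0 < Real.exp (2*s) := Real.exp_pos _
  nlinarith [sq_nonneg s, sq_nonneg (s*s), mul_pos hpos hpos]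

theorem stmt14 :
    (∀ x : ℝ, 0 < x → x < 1 → (x ^ 2 - 1) / 2 - Real.log x ≤ (Real.log x) ^ 2) ∧
      ∀ (Z : ℕ) (r : ℝ), 1 ≤ Z → 0 < r → r < 1 →
        ((Z : ℝ) * ((r ^ 2 - 1) / 2 - Real.log r)) ≤
          ((Z : ℝ) * (-Real.log r)) ^ 2 / (Z : ℝ) := by
  refine ⟨key, fun Z r hZ hr hr1 => ?_⟩
  have hZ' : (1 : ℝ) ≤ (Z : ℝ) := by exact_mod_cast hZ
  have hk := key r hr hr1
  have : ((Z : ℝ) * (-Real.log r)) ^ 2 / (Z : ℝ) = (Z : ℝ) * (Real.log r) ^ 2 := by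
    field_simp
  rw [this]
  nlinarith
end

section
/- Let z_1, …, z_N be nonzero complex numbers with Z ≥ 1 of them inside the open unit disk, set A = Σ_{|z_n|<1} ((|z_n|²−1)/2 − log|z_n|) and T = Σ_{|z_n|<1}(−log|z_n|), and assume A < 1. Then T²/Z ≤ A (1 + (2/3)·√A/(1 − √A)). -/
/-!
Write `t = -log ‖z‖` and `a = (‖z‖² - 1) / 2 - log ‖z‖ = t - (1 - e^{-2t}) / 2` for a zero in the
disk. Taylor bounds for `e^{-2t}` pin `√a` between polynomials in `t`, which yields the per-zero
inequality `t² - a ≤ √a (t² - a / 3)`. Since `a ≤ A`, `√a` may be replaced by `√A`; summing gives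
`(∑ t²)(1 - √A) ≤ A (1 - √A / 3)`, and Cauchy–Schwarz `T² ≤ Z ∑ t²` concludes.
-/

open Real Finset
open scoped Nat

theorem hasDerivAt_neg_pow_succ_div_factorial (i : ℕ) (y : ℝ) :
    HasDerivAt (fun y : ℝ => (-y) ^ (i + 1) / (i + 1)!) (-((-y) ^ i / i !)) y := by
  refine (((hasDerivAt_id y).neg.pow (i + 1)).div_const ((i + 1)! : ℝ)).congr_deriv ?_
  rw [Nat.factorial_succ]; push_cast
  field_simp
  simp

theorem exp_neg_taylor_alternating (n : ℕ) {x : ℝ} (hx : 0 ≤ x) :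
    0 ≤ (-1) ^ n * (exp (-x) - ∑ i ∈ range n, (-x) ^ i / i !) := by
  induction n generalizing x with
  | zero => simp [(exp_pos _).le]
  | succ n ih =>
    have hderiv (y : ℝ) : HasDerivAt
        (fun y => (-1) ^ (n + 1) * (exp (-y) - ∑ i ∈ range (n + 1), (-y) ^ i / i !))
        ((-1) ^ n * (exp (-y) - ∑ i ∈ range n, (-y) ^ i / i !)) y := by
      simp_rw [sum_range_succ']
      refine (((hasDerivAt_id y).neg.exp.sub ((HasDerivAt.fun_sum (u := range n)
        fun i _ => hasDerivAt_neg_pow_succ_div_factorial i y).add_const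
        ((-y) ^ 0 / (0 ! : ℝ)))).const_mul ((-1 : ℝ) ^ (n + 1))).congr_deriv ?_
      simp only [sum_neg_distrib, pow_succ, Pi.neg_apply, id_eq]
      ring
    have hmono := monotoneOn_of_hasDerivWithinAt_nonneg (convex_Ici (0 : ℝ))
      (fun y _ => (hderiv y).continuousAt.continuousWithinAt)
      (fun y _ => (hderiv y).hasDerivWithinAt)
      (fun y hy => ih (le_of_lt (by simpa using hy)))
    simpa [sum_range_succ'] using hmono Set.self_mem_Ici hx hx

theorem sq_sub_sq_le_mul_sq_sub_sq_div_three {t s : ℝ} (ht : 0 < t) (ht' : t < 3 / 2)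
    (hs1 : s < 1) (hst : s ≤ t) (hus : t - t ^ 2 / 3 ≤ s) (hs2 : t - 1 / 2 ≤ s ^ 2) :
    t ^ 2 - s ^ 2 ≤ s * (t ^ 2 - s ^ 2 / 3) := by
  have hu0 : 0 ≤ t - t ^ 2 / 3 := by nlinarith
  have hs0 : 0 ≤ s := hu0.trans hus
  rcases le_or_gt t (114 / 100) with hsmall | hlarge
  · -- `s ↦ s t² - s³ / 3 + s²` increases on `[0, t]`; at `s = t - t² / 3` it exceeds `t²`
    -- by `t⁴ / 9 (1 - t + t² / 9)`, which is nonnegative for `t ≤ 1.14`.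
    have hincr : 0 ≤ (s - (t - t ^ 2 / 3)) *
        (t ^ 2 - (s ^ 2 + s * (t - t ^ 2 / 3) + (t - t ^ 2 / 3) ^ 2) / 3) := by
      apply mul_nonneg (by linarith)
      nlinarith [mul_le_mul hst (show t - t ^ 2 / 3 ≤ t by nlinarith) hu0 ht.le]
    have hbase : 0 ≤ t ^ 4 / 9 * (1 - t + t ^ 2 / 9) :=
      mul_nonneg (by positivity) (by nlinarith)
    nlinarith
  · -- Use `s³ ≤ s` and `s ≥ t - t² / 3` in the cubic part, `s² ≥ t - 1 / 2` in the quadratic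
    -- one; what remains is a quartic in `t` that is positive on `[1.14, 3 / 2]`.
    have hcube : s ^ 3 ≤ s := by nlinarith [mul_nonneg hs0 (show 0 ≤ 1 - s ^ 2 by nlinarith)]
    have hsu : 0 ≤ (s - (t - t ^ 2 / 3)) * (t ^ 2 - 1 / 3) :=
      mul_nonneg (by linarith) (by nlinarith)
    have hw0 : (0:ℝ) ≤ t - 114 / 100 := by linarith
    have hw1 : (0:ℝ) ≤ 3 / 2 - t := by linarith
    have hq : 0 ≤ -t ^ 4 / 3 + t ^ 3 - 8 / 9 * t ^ 2 + 2 / 3 * t - 1 / 2 := by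
      nlinarith [mul_nonneg hw0 hw1, mul_nonneg (mul_nonneg hw0 hw0) hw1,
        mul_nonneg (mul_nonneg (mul_nonneg hw0 hw0) hw0) hw1]
    nlinarith

theorem sq_sub_le_mul_sq_sub_div_three_of_exp {t a S : ℝ} (ht : 0 < t)
    (ha : a = t - (1 - exp (-(2 * t))) / 2) (ha1 : a < 1) (hS : √a ≤ S) :
    t ^ 2 - a ≤ S * (t ^ 2 - a / 3) := by
  have h2t : 0 ≤ 2 * t := by positivity
  have hupper : exp (-(2 * t)) ≤ 1 - 2 * t + (2 * t) ^ 2 / 2 := by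
    have := exp_neg_taylor_alternating 3 h2t
    norm_num [sum_range_succ, Nat.factorial] at this
    linarith
  have hlower : 1 - 2 * t + (2 * t) ^ 2 / 2 - (2 * t) ^ 3 / 6 + (2 * t) ^ 4 / 24
      - (2 * t) ^ 5 / 120 ≤ exp (-(2 * t)) := by
    have := exp_neg_taylor_alternating 6 h2t
    norm_num [sum_range_succ, Nat.factorial] at this
    linarith
  have hat : t - 1 / 2 ≤ a := by linarith [exp_pos (-(2 * t))]
  have ht' : t < 3 / 2 := by linarith
  have hat2 : a ≤ t ^ 2 := by linarith
  have hua : (t - t ^ 2 / 3) ^ 2 ≤ a := by nlinarith [pow_pos ht 4]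
  have ha0 : 0 ≤ a := by nlinarith
  have hsa : √a ^ 2 = a := sq_sqrt ha0
  have key := sq_sub_sq_le_mul_sq_sub_sq_div_three ht ht'
    ((sqrt_lt' one_pos).2 (by simpa using ha1))
    ((sqrt_le_left ht.le).2 hat2)
    ((le_sqrt (by nlinarith) ha0).2 hua) (by rw [hsa]; exact hat)
  rw [hsa] at key
  exact key.trans (mul_le_mul_of_nonneg_right hS (by nlinarith))

theorem neg_log_sq_sub_le_mul_sq_sub_div_three {r a S : ℝ} (hr0 : 0 < r) (hr1 : r < 1)
    (ha : a = (r ^ 2 - 1) / 2 - log r) (ha1 : a < 1) (hS : √a ≤ S) :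
    (-log r) ^ 2 - a ≤ S * ((-log r) ^ 2 - a / 3) := by
  refine sq_sub_le_mul_sq_sub_div_three_of_exp (neg_pos.2 (log_neg hr0 hr1)) ?_ ha1 hS
  rw [ha, show -(2 * -log r) = log r + log r by ring, exp_add, exp_log hr0]
  ring

theorem log_le_sq_sub_one_div_two {r : ℝ} (hr : 0 < r) : log r ≤ (r ^ 2 - 1) / 2 := by
  have := log_le_sub_one_of_pos (pow_pos hr 2)
  rw [Real.log_pow] at this
  push_cast at this
  linarith

theorem sum_sq_mul_one_sub_le {ι : Type*} (s : Finset ι) (t a : ι → ℝ) {S : ℝ}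
    (h : ∀ i ∈ s, t i ^ 2 - a i ≤ S * (t i ^ 2 - a i / 3)) :
    (∑ i ∈ s, t i ^ 2) * (1 - S) ≤ (∑ i ∈ s, a i) * (1 - S / 3) := by
  have := sum_le_sum h
  rw [← mul_sum, sum_sub_distrib, sum_sub_distrib, ← sum_div] at this
  linarith

theorem stmt15_general (N : ℕ) (z : Fin N → ℂ) (hz : ∀ n, z n ≠ 0)
    (hA : (∑ n ∈ Finset.univ.filter (fun n => ‖z n‖ < 1),
        (((‖z n‖) ^ 2 - 1) / 2 - Real.log (‖z n‖))) < 1) :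
    (∑ n ∈ Finset.univ.filter (fun n => ‖z n‖ < 1),
        -Real.log (‖z n‖)) ^ 2 /
        ((Finset.univ.filter (fun n => ‖z n‖ < 1)).card : ℝ) ≤
      (∑ n ∈ Finset.univ.filter (fun n => ‖z n‖ < 1),
          (((‖z n‖) ^ 2 - 1) / 2 - Real.log (‖z n‖))) *
        (1 + 2 / 3 *
          (Real.sqrt (∑ n ∈ Finset.univ.filter (fun n => ‖z n‖ < 1),
              (((‖z n‖) ^ 2 - 1) / 2 - Real.log (‖z n‖))) /
            (1 - Real.sqrt (∑ n ∈ Finset.univ.filter (fun n => ‖z n‖ < 1),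
              (((‖z n‖) ^ 2 - 1) / 2 - Real.log (‖z n‖)))))) := by
  set F := univ.filter (fun n => ‖z n‖ < 1)
  set a : Fin N → ℝ := fun n => (‖z n‖ ^ 2 - 1) / 2 - log ‖z n‖
  set t : Fin N → ℝ := fun n => -log ‖z n‖
  set A := ∑ n ∈ F, a n
  have ha0 (n : Fin N) : 0 ≤ a n :=
    sub_nonneg.2 (log_le_sq_sub_one_div_two (norm_pos_iff.2 (hz n)))
  have haA {n : Fin N} (hn : n ∈ F) : a n ≤ A := single_le_sum (fun m _ => ha0 m) hn
  have hS1 : √A < 1 := (sqrt_lt' one_pos).2 (by simpa using hA)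
  have hterm : ∀ n ∈ F, t n ^ 2 - a n ≤ √A * (t n ^ 2 - a n / 3) := fun n hn =>
    neg_log_sq_sub_le_mul_sq_sub_div_three (norm_pos_iff.2 (hz n)) (mem_filter.1 hn).2 rfl
      ((haA hn).trans_lt hA) (sqrt_le_sqrt (haA hn))
  calc (∑ n ∈ F, t n) ^ 2 / #F ≤ ∑ n ∈ F, t n ^ 2 :=
        div_le_of_le_mul₀ (by positivity) (sum_nonneg fun n _ => sq_nonneg _)
          (by simpa only [mul_comm] using sq_sum_le_card_mul_sum_sq)
    _ ≤ A * (1 - √A / 3) / (1 - √A) :=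
        (le_div_iff₀ (by linarith)).2 (sum_sq_mul_one_sub_le F t a hterm)
    _ = A * (1 + 2 / 3 * (√A / (1 - √A))) := by
        field_simp [(by linarith : (1 : ℝ) - √A ≠ 0)]
        ring

theorem stmt15 (N : ℕ) (z : Fin N → ℂ) (hz : ∀ n, z n ≠ 0)
    (hZ : 1 ≤ (Finset.univ.filter (fun n => ‖z n‖ < 1)).card)
    (hA : (∑ n ∈ Finset.univ.filter (fun n => ‖z n‖ < 1),
        (((‖z n‖) ^ 2 - 1) / 2 - Real.log (‖z n‖))) < 1) :
    (∑ n ∈ Finset.univ.filter (fun n => ‖z n‖ < 1),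
        -Real.log (‖z n‖)) ^ 2 /
        ((Finset.univ.filter (fun n => ‖z n‖ < 1)).card : ℝ) ≤
      (∑ n ∈ Finset.univ.filter (fun n => ‖z n‖ < 1),
          (((‖z n‖) ^ 2 - 1) / 2 - Real.log (‖z n‖))) *
        (1 + 2 / 3 *
          (Real.sqrt (∑ n ∈ Finset.univ.filter (fun n => ‖z n‖ < 1),
              (((‖z n‖) ^ 2 - 1) / 2 - Real.log (‖z n‖))) /
            (1 - Real.sqrt (∑ n ∈ Finset.univ.filter (fun n => ‖z n‖ < 1),
              (((‖z n‖) ^ 2 - 1) / 2 - Real.log (‖z n‖)))))) :=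
  stmt15_general N z hz hA
end

section
/- For all real A with 0 ≤ A < 1, Σ_{k≥1} (Σ_{ℓ=1}^{k+1} 1/(ℓ(k+2−ℓ)) − 1/(k+2)) A^{k/2} ≤ (2/3) · √A/(1 − √A). -/
/-!
Writing `n = k + 3`, partial fractions `1/(l(n-l)) = (1/l + 1/(n-l))/n` turn the inner sum into
`2 H_{n-1} / n`, so the coefficient is `(2 H_{n-1} - 1)/n`. It lies in `[0, 2/3]` because
`1 ≤ H_{n-1} ≤ n/3 + 1/2` for `n ≥ 3`, and `A ^ ((k+1)/2) = √A ^ (k+1)`, so the series is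
dominated by the geometric series `(2/3) ∑ √A ^ (k+1) = (2/3) √A/(1 - √A)`.
-/

open Finset

lemma sum_Icc_one_div_le {m : ℕ} (hm : 2 ≤ m) :
    ∑ l ∈ Icc 1 m, (1 : ℝ) / l ≤ ((m : ℝ) + 1) / 3 + 1 / 2 := by
  induction m, hm using Nat.le_induction with
  | base => norm_num [sum_Icc_succ_top]
  | succ n hn ih =>
    rw [sum_Icc_succ_top (by omega)]
    have : (1 : ℝ) / ((n + 1 : ℕ) : ℝ) ≤ 1 / 3 := by
      rw [div_le_div_iff_of_pos_left one_pos (by positivity) (by norm_num)]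
      exact_mod_cast Nat.succ_le_succ hn
    push_cast at ih this ⊢
    linarith

lemma one_le_sum_Icc_one_div {m : ℕ} (hm : 1 ≤ m) : 1 ≤ ∑ l ∈ Icc 1 m, (1 : ℝ) / l := by
  simpa using single_le_sum (f := fun l : ℕ => (1 : ℝ) / l) (fun _ _ => by positivity)
    (mem_Icc.2 ⟨le_rfl, hm⟩)

lemma sum_Icc_one_div_reflect (m : ℕ) :
    ∑ l ∈ Icc 1 m, (1 : ℝ) / ((m + 1 - l : ℕ) : ℝ) = ∑ l ∈ Icc 1 m, (1 : ℝ) / l := by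
  apply sum_nbij' (fun l => m + 1 - l) (fun l => m + 1 - l)
  all_goals intro a ha; simp only [mem_Icc] at ha ⊢ <;> omega

lemma sum_Icc_one_div_mul_reflect (m : ℕ) :
    ∑ l ∈ Icc 1 m, (1 : ℝ) / ((l : ℝ) * ((m + 1 - l : ℕ) : ℝ)) =
      2 / ((m : ℝ) + 1) * ∑ l ∈ Icc 1 m, (1 : ℝ) / l := by
  have partial_fractions : ∀ l ∈ Icc 1 m, (1 : ℝ) / ((l : ℝ) * ((m + 1 - l : ℕ) : ℝ)) =
      1 / ((m : ℝ) + 1) * ((1 : ℝ) / l + (1 : ℝ) / ((m + 1 - l : ℕ) : ℝ)) := by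
    intro l hl
    obtain ⟨hl1, hlm⟩ := mem_Icc.1 hl
    have hl0 : (0 : ℝ) < l := by exact_mod_cast hl1
    have hlm' : (l : ℝ) ≤ m := by exact_mod_cast hlm
    rw [Nat.cast_sub (by omega), Nat.cast_add_one]
    field_simp [show (m : ℝ) + 1 - l ≠ 0 by linarith]
    ring
  rw [sum_congr rfl partial_fractions, ← mul_sum, sum_add_distrib, sum_Icc_one_div_reflect]
  ring

lemma sum_Icc_one_div_mul_reflect_sub_mem_Icc {m : ℕ} (hm : 2 ≤ m) :
    ∑ l ∈ Icc 1 m, (1 : ℝ) / ((l : ℝ) * ((m + 1 - l : ℕ) : ℝ)) - 1 / ((m : ℝ) + 1) ∈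
      Set.Icc 0 (2 / 3) := by
  set H := ∑ l ∈ Icc 1 m, (1 : ℝ) / l
  have hpos : (0 : ℝ) < (m : ℝ) + 1 := by positivity
  have hcoeff : 2 / ((m : ℝ) + 1) * H - 1 / ((m : ℝ) + 1) = (2 * H - 1) / ((m : ℝ) + 1) := by
    ring
  have hlow : 1 ≤ H := one_le_sum_Icc_one_div (by omega)
  have hup : H ≤ ((m : ℝ) + 1) / 3 + 1 / 2 := sum_Icc_one_div_le hm
  rw [sum_Icc_one_div_mul_reflect, hcoeff]
  exact ⟨div_nonneg (by linarith) hpos.le, (div_le_iff₀ hpos).2 (by linarith)⟩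

lemma tsum_mul_pow_succ_le {c : ℕ → ℝ} {C s : ℝ} (hc : ∀ k, c k ∈ Set.Icc 0 C)
    (hs0 : 0 ≤ s) (hs1 : s < 1) : ∑' k, c k * s ^ (k + 1) ≤ C * (s / (1 - s)) := by
  have hgeom : HasSum (fun k : ℕ => C * s ^ (k + 1)) (C * (s / (1 - s))) := by
    have := (hasSum_geometric_of_lt_one hs0 hs1).mul_left (C * s)
    simpa [pow_succ, div_eq_mul_inv, mul_comm, mul_left_comm, mul_assoc] using this
  have hle : ∀ k, c k * s ^ (k + 1) ≤ C * s ^ (k + 1) := fun k =>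
    mul_le_mul_of_nonneg_right (hc k).2 (by positivity)
  have hsum : Summable fun k => c k * s ^ (k + 1) :=
    hgeom.summable.of_nonneg_of_le (fun k => mul_nonneg (hc k).1 (by positivity)) hle
  exact hgeom.tsum_eq ▸ hsum.tsum_le_tsum hle hgeom.summable

lemma rpow_succ_div_two {A : ℝ} (hA : 0 ≤ A) (k : ℕ) :
    A ^ (((k : ℝ) + 1) / 2) = √A ^ (k + 1) := by
  rw [Real.sqrt_eq_rpow, ← Real.rpow_natCast, ← Real.rpow_mul hA]
  push_cast
  ring_nf

theorem stmt16 (A : ℝ) (hA0 : 0 ≤ A) (hA1 : A < 1) :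
    (∑' k : ℕ,
        ((∑ l ∈ Finset.Icc 1 (k + 2), (1 : ℝ) / ((l : ℝ) * ((k + 3 - l : ℕ) : ℝ))) -
            1 / ((k : ℝ) + 3)) * A ^ (((k : ℝ) + 1) / 2)) ≤
      2 / 3 * (Real.sqrt A / (1 - Real.sqrt A)) := by
  simp_rw [rpow_succ_div_two hA0]
  refine tsum_mul_pow_succ_le (fun k => ?_) (Real.sqrt_nonneg A)
    ((Real.sqrt_lt' one_pos).2 (by simpa using hA1))
  have := sum_Icc_one_div_mul_reflect_sub_mem_Icc (by omega : 2 ≤ k + 2)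
  push_cast at this
  convert this using 3
  ring
end

section
/- For a polynomial P(z) = a_N ∏_{n=1}^N (z − z_n) with a_N ≠ 0 and P(0) ≠ 0, the areal Mahler measure satisfies log‖P‖₀ = log|a_0| + Σ_{|z_n|<1} ((|z_n|² − 1)/2 − log|z_n|), where a_0 = P(0). -/
/-!
In polar coordinates the integral of `f` over the unit disk is `2π ∫₀¹ r · A_f(r) dr`, where
`A_f(r)` is the average of `f` over the circle of radius `r`. For `f = log ‖· - c‖`, Jensen's
formula gives `A_f(r) = log (max r ‖c‖)`, and integrating `r log (max r ‖c‖)` yields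
`π (‖c‖² - 1) / 2` if `‖c‖ < 1` and `π log ‖c‖` otherwise. Off the finitely many roots,
`log |P| = log |a_N| + Σ log |w - z_n|`, while `log |a_0| = log |a_N| + Σ log |z_n|`.
-/

open MeasureTheory Real Set Metric

theorem Complex.polarCoord_symm_eq_circleMap (p : ℝ × ℝ) :
    Complex.polarCoord.symm p = circleMap 0 p.1 p.2 := by
  simp [circleMap, Complex.exp_mul_I]

section

variable {E : Type*} [NormedAddCommGroup E] [NormedSpace ℝ E]

theorem Complex.integrable_iff_integrableOn_polarCoord_target (f : ℂ → E) :
    Integrable f ↔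
      IntegrableOn (fun p : ℝ × ℝ => p.1 • f (circleMap 0 p.1 p.2)) polarCoord.target := by
  rw [← (Complex.volume_preserving_equiv_real_prod.symm).integrable_comp_emb
      Complex.measurableEquivRealProd.symm.measurableEmbedding, ← integrableOn_univ,
    ← integrableOn_congr_set_ae polarCoord_source_ae_eq_univ,
    ← polarCoord.symm_image_target_eq_source,
    integrableOn_image_iff_integrableOn_abs_det_fderiv_smul volume
      polarCoord.open_target.measurableSet
      (fun p _ => (hasFDerivAt_polarCoord_symm p).hasFDerivWithinAt) polarCoord.symm.injOn]
  refine integrableOn_congr_fun (fun p hp => ?_) polarCoord.open_target.measurableSet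
  simp only [det_fderivPolarCoordSymm, abs_of_pos (show 0 < p.1 from hp.1), Function.comp_apply,
    Complex.measurableEquivRealProd_symm_polarCoord_symm_apply,
    Complex.polarCoord_symm_eq_circleMap]

theorem circleAverage_eq_integral_neg_pi_pi (f : ℂ → E) (c : ℂ) (R : ℝ) :
    circleAverage f c R = (2 * π)⁻¹ • ∫ θ in -π..π, f (circleMap c R θ) := by
  rw [circleAverage_eq_integral_add (-π), intervalIntegral.integral_comp_add_right
    (fun θ => f (circleMap c R θ))]
  congr 2 <;> ring

theorem integral_ball_eq_integral_smul_circleAverage {f : ℂ → E} {R : ℝ} (hR : 0 ≤ R)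
    (hf : IntegrableOn f (ball 0 R)) :
    ∫ w in ball 0 R, f w = (2 * π) • ∫ r in 0..R, r • circleAverage f 0 r := by
  set S : Set (ℝ × ℝ) := Ioo 0 R ×ˢ Ioo (-π) π
  have hS : MeasurableSet S := measurableSet_Ioo.prod measurableSet_Ioo
  have hSsub : S ⊆ polarCoord.target := prod_mono_left Ioo_subset_Ioi_self
  have hpolar : EqOn (fun p : ℝ × ℝ => p.1 • (ball 0 R).indicator f (circleMap 0 p.1 p.2))
      (S.indicator fun p => p.1 • f (circleMap 0 p.1 p.2)) polarCoord.target := by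
    intro p hp
    have hp1 : 0 < p.1 := hp.1
    dsimp only
    by_cases hpR : p.1 < R
    · have hmem : circleMap 0 p.1 p.2 ∈ ball 0 R := by simp [abs_of_pos hp1, hpR]
      rw [indicator_of_mem hmem, indicator_of_mem (show p ∈ S from ⟨⟨hp1, hpR⟩, hp.2⟩)]
    · have hmem : circleMap 0 p.1 p.2 ∉ ball 0 R := by simp [abs_of_pos hp1, hpR]
      rw [indicator_of_notMem hmem, indicator_of_notMem (show p ∉ S from fun h => hpR h.1.2),
        smul_zero]
  have hSint : IntegrableOn (fun p : ℝ × ℝ => p.1 • f (circleMap 0 p.1 p.2)) S := by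
    have := (Complex.integrable_iff_integrableOn_polarCoord_target _).1
      ((integrable_indicator_iff measurableSet_ball).2 hf)
    rw [integrableOn_congr_fun hpolar polarCoord.open_target.measurableSet] at this
    exact (this.mono_set hSsub).congr_fun (fun p hp => indicator_of_mem hp _) hS
  calc ∫ w in ball 0 R, f w
      = ∫ p in polarCoord.target, S.indicator (fun p => p.1 • f (circleMap 0 p.1 p.2)) p := by
        rw [← integral_indicator measurableSet_ball, ← Complex.integral_comp_polarCoord_symm]
        simp_rw [Complex.polarCoord_symm_eq_circleMap]
        exact setIntegral_congr_fun polarCoord.open_target.measurableSet hpolar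
    _ = ∫ r in Ioo 0 R, ∫ θ in Ioo (-π) π, r • f (circleMap 0 r θ) := by
        rw [setIntegral_indicator hS, inter_eq_self_of_subset_right hSsub,
          Measure.volume_eq_prod, setIntegral_prod _ hSint]
    _ = (2 * π) • ∫ r in 0..R, r • circleAverage f 0 r := by
        rw [intervalIntegral.integral_of_le hR, integral_Ioc_eq_integral_Ioo,
          ← integral_smul]
        refine setIntegral_congr_fun measurableSet_Ioo fun r _ => ?_
        rw [circleAverage_eq_integral_neg_pi_pi, smul_comm, smul_inv_smul₀ (by positivity),
          integral_smul, intervalIntegral.integral_of_le (by linarith [pi_pos]),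
          integral_Ioc_eq_integral_Ioo]

end

theorem circleAverage_log_norm_sub_const_eq_log_max (a c : ℂ) (R : ℝ) :
    circleAverage (log ‖· - a‖) c R = log (max |R| ‖c - a‖) := by
  rcases eq_or_ne R 0 with rfl | hR
  · simp
  rw [← circleAverage_abs_radius]
  rcases le_or_gt ‖c - a‖ |R| with h | h
  · rw [circleAverage_log_norm_sub_const_of_mem_closedBall (by simpa [dist_eq_norm'] using h),
      max_eq_left h]
  · have hR' : 0 < |R| := abs_pos.2 hR
    rw [circleAverage_log_norm_sub_const_eq_log_radius_add_posLog hR'.ne', posLog_eq_log,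
      log_mul (inv_ne_zero hR'.ne') (hR'.trans h).ne', log_inv, max_eq_right h.le]
    · ring
    · rw [abs_of_pos (mul_pos (inv_pos.2 hR') (hR'.trans h))]
      exact (one_le_inv_mul₀ hR').2 h.le

theorem integrableOn_ball_log_norm (R : ℝ) :
    IntegrableOn (fun w : ℂ => log ‖w‖) (ball 0 R) := by
  rw [integrableOn_fun_norm_addHaar]
  simpa using (continuous_mul_log.integrableOn_Icc (a := 0) (b := R)).mono_set Ioo_subset_Icc_self

theorem integrableOn_ball_log_norm_sub (c : ℂ) (R : ℝ) :
    IntegrableOn (fun w : ℂ => log ‖w - c‖) (ball 0 R) := by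
  have h := ((integrable_indicator_iff measurableSet_ball).2
    (integrableOn_ball_log_norm (R + ‖c‖))).comp_sub_right c
  refine h.integrableOn.congr_fun (fun w hw => ?_) measurableSet_ball
  refine indicator_of_mem ?_ _
  rw [mem_ball_zero_iff] at hw ⊢
  linarith [norm_sub_le w c]

theorem integral_mul_log_max_of_one_le {ρ : ℝ} (hρ : 1 ≤ ρ) :
    ∫ r in (0 : ℝ)..1, r * log (max r ρ) = log ρ / 2 := by
  have hEq : EqOn (fun r => r * log (max r ρ)) (fun r => log ρ * r) (uIcc 0 1) := by
    intro r hr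
    rw [uIcc_of_le zero_le_one] at hr
    simp only [max_eq_right (hr.2.trans hρ), mul_comm]
  rw [intervalIntegral.integral_congr hEq, intervalIntegral.integral_const_mul, integral_id]
  ring

theorem integral_mul_log_max_of_lt_one {ρ : ℝ} (hρ₀ : 0 ≤ ρ) (hρ₁ : ρ < 1) :
    ∫ r in (0 : ℝ)..1, r * log (max r ρ) = (ρ ^ 2 - 1) / 4 := by
  have hlow : EqOn (fun r => r * log (max r ρ)) (fun r => log ρ * r) (uIcc 0 ρ) := by
    intro r hr
    rw [uIcc_of_le hρ₀] at hr
    simp only [max_eq_right hr.2, mul_comm]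
  have hhigh : EqOn (fun r => r * log (max r ρ)) (fun r => r * log r) (uIcc ρ 1) := by
    intro r hr
    rw [uIcc_of_le hρ₁.le] at hr
    simp only [max_eq_left hr.1]
  have hcont : Continuous fun r : ℝ => r * log r := continuous_mul_log
  have hprim : Continuous fun x : ℝ => x ^ 2 * log x / 2 - x ^ 2 / 4 :=
    ((continuous_id.mul hcont).congr fun x => by simp only [Pi.mul_apply, id]; ring).div_const 2
      |>.sub (by fun_prop)
  have hderiv : ∀ r ∈ Ioo ρ 1,
      HasDerivAt (fun x => x ^ 2 * log x / 2 - x ^ 2 / 4) (r * log r) r := by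
    intro r hr
    have hr0 : r ≠ 0 := (hρ₀.trans_lt hr.1).ne'
    refine (((hasDerivAt_pow 2 r).mul (hasDerivAt_log hr0)).div_const 2
      |>.sub ((hasDerivAt_pow 2 r).div_const 4)).congr_deriv ?_
    field_simp
    ring
  rw [← intervalIntegral.integral_add_adjacent_intervals
      ((intervalIntegrable_congr (hlow.mono uIoc_subset_uIcc)).2
        ((continuous_const_mul (log ρ)).intervalIntegrable _ _))
      ((intervalIntegrable_congr (hhigh.mono uIoc_subset_uIcc)).2
        (hcont.intervalIntegrable _ _)),
    intervalIntegral.integral_congr hlow, intervalIntegral.integral_congr hhigh,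
    intervalIntegral.integral_const_mul, integral_id,
    intervalIntegral.integral_eq_sub_of_hasDerivAt_of_le hρ₁.le hprim.continuousOn
      hderiv (hcont.intervalIntegrable _ _)]
  simp only [log_one]
  ring

theorem Complex.volume_real_unitBall : volume.real (ball (0 : ℂ) 1) = π := by
  simp [measureReal_def]

theorem integral_unitBall_log_norm_sub (c : ℂ) :
    ∫ w in ball 0 1, log ‖w - c‖ = π * if ‖c‖ < 1 then (‖c‖ ^ 2 - 1) / 2 else log ‖c‖ := by
  have hradial : EqOn (fun r : ℝ => r • circleAverage (log ‖· - c‖) 0 r)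
      (fun r => r * log (max r ‖c‖)) (uIcc 0 1) := by
    intro r hr
    rw [uIcc_of_le zero_le_one] at hr
    simp only [smul_eq_mul, circleAverage_log_norm_sub_const_eq_log_max, zero_sub, norm_neg,
      abs_of_nonneg hr.1]
  rw [integral_ball_eq_integral_smul_circleAverage zero_le_one
      (integrableOn_ball_log_norm_sub c 1), intervalIntegral.integral_congr hradial, smul_eq_mul]
  split_ifs with h
  · rw [integral_mul_log_max_of_lt_one (norm_nonneg c) h]
    ring
  · rw [integral_mul_log_max_of_one_le (not_lt.1 h)]
    ring

theorem log_norm_mul_prod {K ι : Type*} [NormedField K] (s : Finset ι) {a : K} {f : ι → K}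
    (ha : a ≠ 0) (hf : ∀ i ∈ s, f i ≠ 0) :
    log ‖a * ∏ i ∈ s, f i‖ = log ‖a‖ + ∑ i ∈ s, log ‖f i‖ := by
  rw [norm_mul, norm_prod, log_mul (norm_ne_zero_iff.2 ha)
      (Finset.prod_ne_zero_iff.2 fun i hi => norm_ne_zero_iff.2 (hf i hi)),
    log_prod fun i hi => norm_ne_zero_iff.2 (hf i hi)]

theorem stmt17 (N : ℕ) (a : ℂ) (z : Fin N → ℂ) (ha : a ≠ 0) (hz : ∀ n, z n ≠ 0) :
    (1 / Real.pi) *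
        ∫ w in Metric.ball (0 : ℂ) 1,
          Real.log (‖a * ∏ n, (w - z n)‖) =
      Real.log (‖a * ∏ n, ((0 : ℂ) - z n)‖) +
        ∑ n ∈ Finset.univ.filter fun n => ‖z n‖ < 1,
          ((‖z n‖ ^ 2 - 1) / 2 - Real.log ‖z n‖) := by
  have hoff_roots : ∀ᵐ w : ℂ ∂volume.restrict (ball 0 1), ∀ n, w - z n ≠ 0 :=
    ae_restrict_of_ae <| ae_all_iff.2 fun n =>
      Filter.mem_of_superset (compl_mem_ae_iff.2 (measure_singleton (z n)))
        fun _ hw => sub_ne_zero.2 hw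
  have hint := fun n => integrableOn_ball_log_norm_sub (z n) 1
  have hconst : IntegrableOn (fun _ : ℂ => log ‖a‖) (ball 0 1) :=
    integrableOn_const measure_ball_lt_top.ne
  calc (1 / π) * ∫ w in ball 0 1, log ‖a * ∏ n, (w - z n)‖
      = (1 / π) * ∫ w in ball 0 1, (log ‖a‖ + ∑ n, log ‖w - z n‖) := by
        congr 1
        refine integral_congr_ae (hoff_roots.mono fun w hw => ?_)
        exact log_norm_mul_prod _ ha fun n _ => hw n
    _ = log ‖a‖ + ∑ n, if ‖z n‖ < 1 then (‖z n‖ ^ 2 - 1) / 2 else log ‖z n‖ := by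
        rw [integral_add hconst (integrable_finsetSum _ fun n _ => hint n),
          integral_finsetSum _ fun n _ => hint n, setIntegral_const,
          Complex.volume_real_unitBall]
        simp_rw [integral_unitBall_log_norm_sub, smul_eq_mul]
        rw [← Finset.mul_sum, ← mul_add, one_div, inv_mul_cancel_left₀ pi_ne_zero]
    _ = _ := by
        rw [log_norm_mul_prod _ ha fun n _ => by simpa using hz n, Finset.sum_filter, add_assoc,
          ← Finset.sum_add_distrib]
        congr 1
        refine Finset.sum_congr rfl fun n _ => ?_
        split_ifs <;> simp
end

section
/- As n → ∞, log n + (n/2)(n^{−2/n} − 1) = (log² n)/n + O((log³ n)/n²); in particular log‖P_n‖₀ → 0 for P_n(z) = n z^n − 1 while log M(P_n) = log n → ∞. -/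
/-!
Write `n ^ (-2 / n) = exp y` with `y = -2 log n / n`. The expression becomes
`(n / 2) (exp y - 1 - y - y ^ 2 / 2) + log² n / n`. Since `log n ≤ n / 2` we have `|y| ≤ 1`, so
the Taylor remainder of `exp` at `y` is at most `(2 / 9) |y| ^ 3`, which after multiplying by
`n / 2` is `(8 / 9) log³ n / n²`. Both this error and `log² n / n` tend to `0`.
-/

open Filter Real

lemma Real.log_le_half_self {x : ℝ} (hx : 0 < x) : log x ≤ x / 2 := by
  rw [log_le_iff_le_exp hx]
  nlinarith [quadratic_le_exp_of_nonneg (by positivity : 0 ≤ x / 2)]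

lemma Real.abs_exp_sub_quadratic_le {y : ℝ} (hy : |y| ≤ 1) :
    |exp y - (1 + y + y ^ 2 / 2)| ≤ 2 / 9 * |y| ^ 3 := by
  have h := exp_bound hy (n := 3) (by norm_num)
  norm_num [Finset.sum_range_succ, Nat.factorial] at h
  linarith

lemma log_add_half_mul_rpow_sub_one_sub_eq {x : ℝ} (hx : 0 < x) :
    log x + x / 2 * (x ^ (-2 / x) - 1) - log x ^ 2 / x =
      x / 2 * (exp (-2 * log x / x) - (1 + (-2 * log x / x) + (-2 * log x / x) ^ 2 / 2)) := by
  rw [rpow_def_of_pos hx, mul_div_assoc', mul_comm (log x)]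
  field_simp
  ring

lemma abs_log_add_half_mul_rpow_sub_one_sub_le {x : ℝ} (hx : 1 ≤ x) :
    |log x + x / 2 * (x ^ (-2 / x) - 1) - log x ^ 2 / x| ≤ 8 / 9 * (log x ^ 3 / x ^ 2) := by
  have hx0 : 0 < x := by linarith
  have hlog : 0 ≤ log x := log_nonneg hx
  have hy : |-2 * log x / x| = 2 * log x / x := by
    rw [abs_div, abs_of_pos hx0, abs_mul, abs_of_nonneg hlog]
    norm_num
  have hy1 : |-2 * log x / x| ≤ 1 := by
    rw [hy, div_le_one hx0]
    linarith [log_le_half_self hx0]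
  rw [log_add_half_mul_rpow_sub_one_sub_eq hx0, abs_mul, abs_of_pos (by positivity : 0 < x / 2)]
  calc x / 2 * |exp (-2 * log x / x) - (1 + -2 * log x / x + (-2 * log x / x) ^ 2 / 2)|
      ≤ x / 2 * (2 / 9 * (2 * log x / x) ^ 3) := by
        rw [← hy]
        gcongr
        exact abs_exp_sub_quadratic_le hy1
    _ = 8 / 9 * (log x ^ 3 / x ^ 2) := by
        field_simp
        ring

lemma isBigO_log_add_half_mul_rpow_sub_one_sub :
    (fun x : ℝ => log x + x / 2 * (x ^ (-2 / x) - 1) - log x ^ 2 / x) =O[atTop]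
      fun x => log x ^ 3 / x ^ 2 := by
  refine Asymptotics.IsBigO.of_bound (8 / 9) ?_
  filter_upwards [eventually_ge_atTop 1] with x hx
  rw [norm_eq_abs, norm_of_nonneg (by have := log_nonneg hx; positivity)]
  exact abs_log_add_half_mul_rpow_sub_one_sub_le hx

lemma tendsto_log_pow_div_pow_atTop {k m : ℕ} (hm : 0 < m) :
    Tendsto (fun x : ℝ => log x ^ k / x ^ m) atTop (nhds 0) := by
  have h : Tendsto (fun x : ℝ => log x ^ k / x) atTop (nhds 0) := by
    simpa using tendsto_pow_log_div_mul_add_atTop 1 0 k one_ne_zero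
  refine tendsto_of_tendsto_of_tendsto_of_le_of_le' tendsto_const_nhds h ?_ ?_ <;>
    filter_upwards [eventually_ge_atTop 1] with x hx
  · have := log_nonneg hx
    positivity
  · have := log_nonneg hx
    gcongr
    exact le_self_pow₀ hx hm.ne'

lemma tendsto_log_add_half_mul_rpow_sub_one :
    Tendsto (fun x : ℝ => log x + x / 2 * (x ^ (-2 / x) - 1)) atTop (nhds 0) := by
  have h := (isBigO_log_add_half_mul_rpow_sub_one_sub.trans_tendsto
    (tendsto_log_pow_div_pow_atTop two_pos)).add (tendsto_log_pow_div_pow_atTop (k := 2) one_pos)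
  simpa using h

theorem stmt19 :
    ((fun n : ℕ => Real.log n + (n / 2) * ((n : ℝ) ^ (-2 / (n : ℝ)) - 1) -
          (Real.log n) ^ 2 / n) =O[atTop] fun n : ℕ => (Real.log n) ^ 3 / (n : ℝ) ^ 2) ∧
      Tendsto (fun n : ℕ => Real.log n + (n / 2) * ((n : ℝ) ^ (-2 / (n : ℝ)) - 1))
        atTop (nhds 0) ∧
      Tendsto (fun n : ℕ => Real.log n) atTop atTop :=
  ⟨isBigO_log_add_half_mul_rpow_sub_one_sub.comp_tendsto tendsto_natCast_atTop_atTop,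
    tendsto_log_add_half_mul_rpow_sub_one.comp tendsto_natCast_atTop_atTop,
    tendsto_log_atTop.comp tendsto_natCast_atTop_atTop⟩
end
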